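/- arXiv:2112.01981 — 3 statements merged into one kernel-verified Lean document; each statement's English description precedes it below -/
import Mathlib

section
/- Fix m ≥ 2, K ≥ 2, σ_y² > 0, σ_z² > 0, δ ≠ 0, and let c(ρ₀,ρ₁,ρ₂) = 1 + (m−1)ρ₀ − ρ₂ − (m−1)ρ₁ be positive. Under the block exchangeable structure with equal marginal variances, the noncentrality parameter of the test for treatment effect homogeneity with contrast Lβ having ||Lβ||² fixed is proportional to 1/c, and is therefore strictly decreasing in ρ₀ and strictly increasing in ρ₁ and ρ₂. -/
/-!
Every row of `L` sums to zero, so `L` annihilates the all-ones matrix `J` and the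
exchangeable part of `Ω_β` disappears from `L Ω_β Lᵀ`, leaving a scalar multiple `c · L Lᵀ`.
Inverting a scalar multiple inverts the scalar, so `τ` is `τ₀` divided by a positive multiple
of `c`; since `c` is strictly increasing in `ρ₀` and strictly decreasing in `ρ₁` and `ρ₂`,
the monotonicity claims follow.
-/

open Matrix

namespace Matrix

variable {ι κ μ R 𝕜 : Type*} [Fintype ι]

-- No invertibility hypothesis is needed: when `k = 0` or `A` is singular both sides are the junk `0`.
theorem inv_smul₀ [DecidableEq ι] [Field 𝕜] (k : 𝕜) (A : Matrix ι ι 𝕜) :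
    (k • A)⁻¹ = k⁻¹ • A⁻¹ := by
  rcases eq_or_ne k 0 with rfl | hk
  · simp
  by_cases hA : IsUnit A.det
  · exact inv_smul' A (Units.mk0 k hk) hA
  · have hkA : ¬IsUnit (k • A).det := by simpa [det_smul, hk] using hA
    rw [nonsing_inv_apply_not_isUnit A hA, nonsing_inv_apply_not_isUnit _ hkA, smul_zero]

theorem dotProduct_inv_smul_mulVec [DecidableEq ι] [Field 𝕜] (k : 𝕜) (A : Matrix ι ι 𝕜)
    (v : ι → 𝕜) :
    v ⬝ᵥ ((k • A)⁻¹ *ᵥ v) = k⁻¹ * (v ⬝ᵥ (A⁻¹ *ᵥ v)) := by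
  rw [inv_smul₀, smul_mulVec, dotProduct_smul, smul_eq_mul]

theorem mul_of_const_eq_zero_of_sum_row_eq_zero [NonUnitalNonAssocSemiring R]
    {L : Matrix κ ι R} (hrow : ∀ s, ∑ k, L s k = 0) (b : R) :
    L * (of fun (_ : ι) (_ : μ) => b) = 0 := by
  ext s j
  simp [mul_apply, ← Finset.sum_mul, hrow s]

theorem mul_exchangeable_mul_transpose_of_sum_row_eq_zero [DecidableEq ι] [CommSemiring R]
    {L : Matrix κ ι R} (hrow : ∀ s, ∑ k, L s k = 0) (a b : R) :
    L * (a • (1 : Matrix ι ι R) + b • of fun _ _ => 1) * Lᵀ = a • (L * Lᵀ) := by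
  rw [Matrix.mul_add, Matrix.mul_smul, Matrix.mul_smul,
    mul_of_const_eq_zero_of_sum_row_eq_zero hrow, smul_zero, add_zero, Matrix.mul_one,
    Matrix.smul_mul]

end Matrix

theorem stmt7_general {S K : ℕ} (m n : ℕ) (hm : 2 ≤ m)
    (sy2 sz2 : ℝ) (hsy : 0 < sy2) (hsz : 0 < sz2)
    (L : Matrix (Fin S) (Fin K) ℝ) (hrow : ∀ s, ∑ k, L s k = 0)
    (β : Fin K → ℝ) :
    let c : ℝ → ℝ → ℝ → ℝ := fun r0 r1 r2 => 1 + ((m:ℝ) - 1) * r0 - r2 - ((m:ℝ) - 1) * r1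
    let Ω : ℝ → ℝ → ℝ → Matrix (Fin K) (Fin K) ℝ := fun r0 r1 r2 =>
      (sy2 / ((m:ℝ) * sz2)) • (c r0 r1 r2 • (1 : Matrix (Fin K) (Fin K) ℝ)
        + (r2 + ((m:ℝ) - 1) * r1) • Matrix.of fun _ _ => (1:ℝ))
    let τ : ℝ → ℝ → ℝ → ℝ := fun r0 r1 r2 =>
      (n:ℝ) * ((L *ᵥ β) ⬝ᵥ ((L * Ω r0 r1 r2 * Lᵀ)⁻¹ *ᵥ (L *ᵥ β)))
    let τ0 : ℝ := (n:ℝ) * ((L *ᵥ β) ⬝ᵥ ((L * Lᵀ)⁻¹ *ᵥ (L *ᵥ β)))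
    (∀ r0 r1 r2 : ℝ, 0 < c r0 r1 r2 →
        L * Ω r0 r1 r2 * Lᵀ = (sy2 * c r0 r1 r2 / ((m:ℝ) * sz2)) • (L * Lᵀ)) ∧
    (∀ r0 r1 r2 : ℝ, 0 < c r0 r1 r2 →
        τ r0 r1 r2 = ((m:ℝ) * sz2 / (sy2 * c r0 r1 r2)) * τ0) ∧
    (0 < τ0 →
      (∀ r0 r0' r1 r2 : ℝ, 0 < c r0 r1 r2 → 0 < c r0' r1 r2 → r0 < r0' →
        τ r0' r1 r2 < τ r0 r1 r2) ∧
      (∀ r0 r1 r1' r2 : ℝ, 0 < c r0 r1 r2 → 0 < c r0 r1' r2 → r1 < r1' →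
        τ r0 r1 r2 < τ r0 r1' r2) ∧
      (∀ r0 r1 r2 r2' : ℝ, 0 < c r0 r1 r2 → 0 < c r0 r1 r2' → r2 < r2' →
        τ r0 r1 r2 < τ r0 r1 r2')) := by
  intro c Ω τ τ0
  have hΩ (r0 r1 r2 : ℝ) :
      L * Ω r0 r1 r2 * Lᵀ = (sy2 * c r0 r1 r2 / ((m:ℝ) * sz2)) • (L * Lᵀ) := by
    rw [Matrix.mul_smul, Matrix.smul_mul, mul_exchangeable_mul_transpose_of_sum_row_eq_zero hrow,
      smul_smul, div_mul_eq_mul_div]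
  have hτ (r0 r1 r2 : ℝ) : τ r0 r1 r2 = ((m:ℝ) * sz2 / (sy2 * c r0 r1 r2)) * τ0 := by
    change (n:ℝ) * _ = _ * ((n:ℝ) * _)
    rw [hΩ, dotProduct_inv_smul_mulVec, inv_div]
    ring
  refine ⟨fun r0 r1 r2 _ => hΩ r0 r1 r2, fun r0 r1 r2 _ => hτ r0 r1 r2, fun hτ0 => ?_⟩
  have anti {r0 r1 r2 r0' r1' r2' : ℝ} (hc' : 0 < c r0' r1' r2')
      (hlt : c r0' r1' r2' < c r0 r1 r2) : τ r0 r1 r2 < τ r0' r1' r2' := by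
    rw [hτ, hτ]
    gcongr
  have hm1 : (0:ℝ) < (m:ℝ) - 1 := by
    have : (2:ℝ) ≤ m := by exact_mod_cast hm
    linarith
  refine ⟨fun r0 r0' r1 r2 h h' hlt => anti h ?_, fun r0 r1 r1' r2 h h' hlt => anti h' ?_,
    fun r0 r1 r2 r2' h h' hlt => anti h' ?_⟩ <;>
  · simp only [c]
    nlinarith

/-- under the block exchangeable structure with equal marginal variances,
the noncentrality parameter of the homogeneity test is proportional to 1/c with
c = 1+(m−1)ρ₀−ρ₂−(m−1)ρ₁ > 0, hence strictly decreasing in ρ₀ and strictly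
increasing in ρ₁ and ρ₂. -/
theorem stmt7 {S K : ℕ} (m n : ℕ) (hm : 2 ≤ m) (hK : 2 ≤ K) (hn : 1 ≤ n)
    (sy2 sz2 : ℝ) (hsy : 0 < sy2) (hsz : 0 < sz2)
    (L : Matrix (Fin S) (Fin K) ℝ) (hrow : ∀ s, ∑ k, L s k = 0)
    (β : Fin K → ℝ) :
    let c : ℝ → ℝ → ℝ → ℝ := fun r0 r1 r2 => 1 + ((m:ℝ) - 1) * r0 - r2 - ((m:ℝ) - 1) * r1
    let Ω : ℝ → ℝ → ℝ → Matrix (Fin K) (Fin K) ℝ := fun r0 r1 r2 =>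
      (sy2 / ((m:ℝ) * sz2)) • (c r0 r1 r2 • (1 : Matrix (Fin K) (Fin K) ℝ)
        + (r2 + ((m:ℝ) - 1) * r1) • Matrix.of fun _ _ => (1:ℝ))
    let τ : ℝ → ℝ → ℝ → ℝ := fun r0 r1 r2 =>
      (n:ℝ) * ((L *ᵥ β) ⬝ᵥ ((L * Ω r0 r1 r2 * Lᵀ)⁻¹ *ᵥ (L *ᵥ β)))
    let τ0 : ℝ := (n:ℝ) * ((L *ᵥ β) ⬝ᵥ ((L * Lᵀ)⁻¹ *ᵥ (L *ᵥ β)))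
    (∀ r0 r1 r2 : ℝ, 0 < c r0 r1 r2 →
        L * Ω r0 r1 r2 * Lᵀ = (sy2 * c r0 r1 r2 / ((m:ℝ) * sz2)) • (L * Lᵀ)) ∧
    (∀ r0 r1 r2 : ℝ, 0 < c r0 r1 r2 →
        τ r0 r1 r2 = ((m:ℝ) * sz2 / (sy2 * c r0 r1 r2)) * τ0) ∧
    (0 < τ0 →
      (∀ r0 r0' r1 r2 : ℝ, 0 < c r0 r1 r2 → 0 < c r0' r1 r2 → r0 < r0' →
        τ r0' r1 r2 < τ r0 r1 r2) ∧
      (∀ r0 r1 r1' r2 : ℝ, 0 < c r0 r1 r2 → 0 < c r0 r1' r2 → r1 < r1' →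
        τ r0 r1 r2 < τ r0 r1' r2) ∧
      (∀ r0 r1 r2 r2' : ℝ, 0 < c r0 r1 r2 → 0 < c r0 r1 r2' → r2 < r2' →
        τ r0 r1 r2 < τ r0 r1 r2')) :=
  stmt7_general m n hm sy2 sz2 hsy hsz L hrow β
end

section
/- Under the multivariate linear mixed model with equal cluster sizes m and treatment indicator z_i centered at z̄, the FGLS estimator of the treatment effect vector satisfies β̂ = [Σ_i (z_i − z̄)²]⁻¹ Σ_i Σ_j m⁻¹ (z_i − z̄) y_{ij}; in particular β̂ does not depend on the covariance matrices Σ_φ, Σ_e. Formally: let W_i = 1_m ⊗ (I_K, (z_i − z̄) I_K) and V = I_m ⊗ Σ_e + J_m ⊗ Σ_φ with Σ_e, Σ_φ positive definite; if Σ_i (z_i − z̄) = 0 and Σ_i (z_i − z̄)² > 0, then the lower K-block of (Σ_i W_i^T V⁻¹ W_i)⁻¹ (Σ_i W_i^T V⁻¹ y_i) equals the stated expression, independent of Σ_e and Σ_φ. -/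
open Matrix
open scoped Kronecker

/-!
Write `U = 1_m ⊗ I_K` and `c_i = z_i - z̄`, so that `W_i = [U, c_i U]`. The column space of `U`
is invariant under `V`: `Uᵀ V = T Uᵀ` with `T = Σ_e + m Σ_φ`, hence `Uᵀ V⁻¹ = T⁻¹ Uᵀ`. Centering
makes the information matrix `Σ_i W_iᵀ V⁻¹ W_i` block diagonal, so the slope block of the
estimator is `(Q Uᵀ V⁻¹ U)⁻¹ Uᵀ V⁻¹ Σ_i c_i y_i = (Q m T⁻¹)⁻¹ T⁻¹ Uᵀ Σ_i c_i y_i`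
with `Q = Σ_i c_i²`, and `T` cancels.
-/

namespace ClusterGLS

section TwoColumnDesign

variable {𝕜 ρ κ ι : Type*} [Field 𝕜] [Fintype ρ] [Fintype ι]

theorem sum_transpose_fromCols_mul_mul_fromCols (U : Matrix ρ κ 𝕜) (G : Matrix ρ ρ 𝕜)
    (c : ι → 𝕜) :
    ∑ i, (fromCols U (c i • U))ᵀ * G * fromCols U (c i • U)
      = fromBlocks ((Fintype.card ι : 𝕜) • (Uᵀ * G * U)) ((∑ i, c i) • (Uᵀ * G * U))
          ((∑ i, c i) • (Uᵀ * G * U)) ((∑ i, c i ^ 2) • (Uᵀ * G * U)) := by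
  simp only [transpose_fromCols, fromRows_mul, transpose_smul, Matrix.smul_mul]
  ext (a | a) (b | b) <;> simp [Matrix.sum_apply, Finset.sum_mul, sq, mul_assoc]

theorem sum_transpose_fromCols_mulVec (U : Matrix ρ κ 𝕜) (G : Matrix ρ ρ 𝕜) (c : ι → 𝕜)
    (y : ι → ρ → 𝕜) :
    ∑ i, (fromCols U (c i • U))ᵀ *ᵥ (G *ᵥ y i)
      = Sum.elim ((Uᵀ * G) *ᵥ ∑ i, y i) ((Uᵀ * G) *ᵥ ∑ i, c i • y i) := by
  simp only [mulVec_mulVec, transpose_fromCols, fromRows_mul, fromRows_mulVec, transpose_smul,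
    Matrix.smul_mul, smul_mulVec, mulVec_sum, mulVec_smul]
  ext (a | a) <;> simp [Finset.sum_apply]

theorem fromBlocks_diagonal_inv_mulVec {m n : Type*} [Fintype m] [DecidableEq m] [Fintype n]
    [DecidableEq n] {P : Matrix m m 𝕜} {R : Matrix n n 𝕜} (h : IsUnit P ↔ IsUnit R)
    (u : m → 𝕜) (v : n → 𝕜) :
    (fromBlocks P 0 0 R)⁻¹ *ᵥ Sum.elim u v = Sum.elim (P⁻¹ *ᵥ u) (R⁻¹ *ᵥ v) := by
  rw [inv_fromBlocks_zero₁₂_of_isUnit_iff _ _ _ h, fromBlocks_mulVec]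
  simp

variable [Fintype κ] [DecidableEq κ]

theorem inv_smul_mul_transpose_mul_mul_eq_one {U : Matrix ρ κ 𝕜}
    {G : Matrix ρ ρ 𝕜} {T : Matrix κ κ 𝕜} {a : 𝕜} (ha : a ≠ 0) (hU : Uᵀ * U = a • 1)
    (hT : Uᵀ = T * (Uᵀ * G)) :
    a⁻¹ • T * (Uᵀ * G * U) = 1 := by
  rw [Matrix.smul_mul, ← Matrix.mul_assoc, ← Matrix.mul_assoc, Matrix.mul_assoc T, ← hT, hU,
    smul_smul, inv_mul_cancel₀ ha, one_smul]

theorem isUnit_smul_iff_isUnit_smul {M : Matrix κ κ 𝕜} {a b : 𝕜} (ha : a ≠ 0) (hb : b ≠ 0) :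
    IsUnit (a • M) ↔ IsUnit (b • M) :=
  (isUnit_smul_iff (Units.mk0 a ha) M).trans (isUnit_smul_iff (Units.mk0 b hb) M).symm

noncomputable def glsEstimate {p : Type*} [Fintype p] [DecidableEq p] (W : ι → Matrix ρ p 𝕜)
    (G : Matrix ρ ρ 𝕜) (y : ι → ρ → 𝕜) : p → 𝕜 :=
  (∑ i, (W i)ᵀ * G * W i)⁻¹ *ᵥ ∑ i, (W i)ᵀ *ᵥ (G *ᵥ y i)

theorem glsEstimate_fromCols_comp_inr [CharZero 𝕜] {U : Matrix ρ κ 𝕜} {G : Matrix ρ ρ 𝕜}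
    {c : ι → 𝕜} (hc : ∑ i, c i = 0) (hQ : ∑ i, c i ^ 2 ≠ 0) (hM : IsUnit (Uᵀ * G * U).det)
    (y : ι → ρ → 𝕜) :
    glsEstimate (fun i => fromCols U (c i • U)) G y ∘ Sum.inr
      = (∑ i, c i ^ 2)⁻¹ • ((Uᵀ * G * U)⁻¹ *ᵥ ((Uᵀ * G) *ᵥ ∑ i, c i • y i)) := by
  have hι : (Fintype.card ι : 𝕜) ≠ 0 :=
    Nat.cast_ne_zero.mpr (Finset.card_ne_zero.mpr (Finset.nonempty_of_sum_ne_zero hQ))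
  have hinv : ((∑ i, c i ^ 2) • (Uᵀ * G * U))⁻¹ = (∑ i, c i ^ 2)⁻¹ • (Uᵀ * G * U)⁻¹ :=
    inv_smul' _ (Units.mk0 _ hQ) hM
  rw [glsEstimate, sum_transpose_fromCols_mul_mul_fromCols, sum_transpose_fromCols_mulVec, hc,
    zero_smul, fromBlocks_diagonal_inv_mulVec (isUnit_smul_iff_isUnit_smul hι hQ),
    Sum.elim_comp_inr, hinv, smul_mulVec]

theorem glsEstimate_fromCols_comp_inr_of_transpose_eq_mul [CharZero 𝕜] {U : Matrix ρ κ 𝕜}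
    {G : Matrix ρ ρ 𝕜} {T : Matrix κ κ 𝕜} {a : 𝕜} (ha : a ≠ 0) (hU : Uᵀ * U = a • 1)
    (hT : Uᵀ = T * (Uᵀ * G)) {c : ι → 𝕜} (hc : ∑ i, c i = 0) (hQ : ∑ i, c i ^ 2 ≠ 0)
    (y : ι → ρ → 𝕜) :
    glsEstimate (fun i => fromCols U (c i • U)) G y ∘ Sum.inr
      = ((∑ i, c i ^ 2) * a)⁻¹ • (Uᵀ *ᵥ ∑ i, c i • y i) := by
  have hleft := inv_smul_mul_transpose_mul_mul_eq_one ha hU hT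
  rw [glsEstimate_fromCols_comp_inr hc hQ (isUnit_det_of_left_inverse hleft),
    inv_eq_left_inv hleft, smul_mulVec, mulVec_mulVec, ← hT, smul_smul, mul_inv]

end TwoColumnDesign

section ClusterCovariance

variable {R ι κ : Type*} [Fintype ι]

def stackedOne (ι κ R : Type*) [DecidableEq κ] [Zero R] [One R] : Matrix (ι × κ) κ R :=
  of fun p k => if p.2 = k then 1 else 0

def clusterCov [DecidableEq ι] [CommRing R] (Se Sp : Matrix κ κ R) :
    Matrix (ι × κ) (ι × κ) R :=
  (1 : Matrix ι ι R) ⊗ₖ Se + of (fun _ _ => 1 : ι → ι → R) ⊗ₖ Sp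

theorem transpose_stackedOne_mul_stackedOne [Fintype κ] [DecidableEq κ] [CommRing R] :
    (stackedOne ι κ R)ᵀ * stackedOne ι κ R = (Fintype.card ι : R) • 1 := by
  ext k k'
  by_cases h : k = k' <;>
    simp [stackedOne, mul_apply, Fintype.sum_prod_type, one_apply, h, eq_comm]

theorem transpose_stackedOne_mulVec_apply [Fintype κ] [DecidableEq κ] [CommRing R]
    (w : ι × κ → R) (k : κ) :
    ((stackedOne ι κ R)ᵀ *ᵥ w) k = ∑ j, w (j, k) := by
  simp [stackedOne, mulVec, dotProduct, Fintype.sum_prod_type]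

theorem transpose_stackedOne_mul_clusterCov [DecidableEq ι] [Fintype κ] [DecidableEq κ]
    [CommRing R] (Se Sp : Matrix κ κ R) :
    (stackedOne ι κ R)ᵀ * clusterCov (ι := ι) Se Sp
      = (Se + (Fintype.card ι : R) • Sp) * (stackedOne ι κ R)ᵀ := by
  ext k ⟨j, k'⟩
  rw [clusterCov, Matrix.mul_add]
  simp [stackedOne, mul_apply, one_apply, Fintype.sum_prod_type]

open scoped ComplexOrder in
theorem posDef_clusterCov [DecidableEq ι] [Fintype κ] {𝕜 : Type*} [RCLike 𝕜]
    {Se Sp : Matrix κ κ 𝕜} (hSe : Se.PosDef) (hSp : Sp.PosSemidef) :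
    (clusterCov (ι := ι) Se Sp).PosDef := by
  have hJ : (of fun _ _ => 1 : Matrix ι ι 𝕜).PosSemidef := by
    simpa [vecMulVec] using posSemidef_vecMulVec_self_star (1 : ι → 𝕜)
  exact (PosDef.one.kronecker hSe).add_posSemidef (hJ.kronecker hSp)

end ClusterCovariance

end ClusterGLS

open ClusterGLS in
theorem stmt14_general {K m n : ℕ} (hm : 1 ≤ m)
    (Se Sp : Matrix (Fin K) (Fin K) ℝ) (hSe : Se.PosDef) (hSp : Sp.PosDef)
    (z : Fin n → ℝ) (zbar : ℝ)
    (hc : ∑ i, (z i - zbar) = 0) (hv : 0 < ∑ i, (z i - zbar)^2)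
    (y : Fin n → (Fin m × Fin K) → ℝ) :
    let V : Matrix (Fin m × Fin K) (Fin m × Fin K) ℝ :=
      Matrix.of fun p q => (if p.1 = q.1 then Se p.2 q.2 else 0) + Sp p.2 q.2
    let W : Fin n → Matrix (Fin m × Fin K) (Fin K ⊕ Fin K) ℝ :=
      fun i => Matrix.of fun p q =>
        Sum.elim (fun k' => if p.2 = k' then (1:ℝ) else 0)
                 (fun k' => if p.2 = k' then z i - zbar else 0) q
    let θhat : (Fin K ⊕ Fin K) → ℝ :=
      (∑ i, (W i)ᵀ * V⁻¹ * W i)⁻¹ *ᵥ (∑ i, (W i)ᵀ *ᵥ (V⁻¹ *ᵥ y i))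
    ∀ k : Fin K, θhat (Sum.inr k)
      = (∑ i, (z i - zbar)^2)⁻¹ * ∑ i, ∑ j : Fin m,
          (1 / (m:ℝ)) * (z i - zbar) * y i (j, k) := by
  intro V W θhat k
  set U := stackedOne (Fin m) (Fin K) ℝ
  have hV : V = clusterCov Se Sp := by
    ext ⟨j, k⟩ ⟨j', k'⟩
    simp [V, clusterCov, one_apply]
  have hW : W = fun i => fromCols U ((z i - zbar) • U) := by
    funext i
    ext p (k' | k') <;> simp [W, U, stackedOne]
  have hT : Uᵀ = (Se + (Fintype.card (Fin m) : ℝ) • Sp) * (Uᵀ * V⁻¹) := by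
    have hVunit : IsUnit V.det :=
      (isUnit_iff_isUnit_det V).mp (hV ▸ (posDef_clusterCov hSe hSp.posSemidef).isUnit)
    rw [← Matrix.mul_assoc, ← transpose_stackedOne_mul_clusterCov, ← hV, Matrix.mul_assoc,
      mul_nonsing_inv _ hVunit, Matrix.mul_one]
  have hm0 : (Fintype.card (Fin m) : ℝ) ≠ 0 := by simpa using Nat.one_le_iff_ne_zero.mp hm
  change glsEstimate W V⁻¹ y (Sum.inr k) = _
  rw [hW]
  refine (congrFun (glsEstimate_fromCols_comp_inr_of_transpose_eq_mul hm0
    transpose_stackedOne_mul_stackedOne hT hc hv.ne' y) k).trans ?_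
  simp only [Pi.smul_apply, transpose_stackedOne_mulVec_apply, Finset.sum_apply, smul_eq_mul,
    Finset.mul_sum, Fintype.card_fin]
  rw [Finset.sum_comm]
  refine Finset.sum_congr rfl fun i _ => Finset.sum_congr rfl fun j _ => ?_
  ring

/-- under the MLMM with equal cluster sizes, the FGLS estimator
of the treatment effect vector is
β̂ = [Σ_i (z_i − z̄)²]⁻¹ Σ_i Σ_j m⁻¹ (z_i − z̄) y_{ij}; in particular it does
not depend on Σ_φ, Σ_e. -/
theorem stmt14 {K m n : ℕ} (hm : 1 ≤ m) (hn : 1 ≤ n)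
    (Se Sp : Matrix (Fin K) (Fin K) ℝ) (hSe : Se.PosDef) (hSp : Sp.PosDef)
    (z : Fin n → ℝ) (zbar : ℝ)
    (hc : ∑ i, (z i - zbar) = 0) (hv : 0 < ∑ i, (z i - zbar)^2)
    (y : Fin n → (Fin m × Fin K) → ℝ) :
    let V : Matrix (Fin m × Fin K) (Fin m × Fin K) ℝ :=
      Matrix.of fun p q => (if p.1 = q.1 then Se p.2 q.2 else 0) + Sp p.2 q.2
    let W : Fin n → Matrix (Fin m × Fin K) (Fin K ⊕ Fin K) ℝ :=
      fun i => Matrix.of fun p q =>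
        Sum.elim (fun k' => if p.2 = k' then (1:ℝ) else 0)
                 (fun k' => if p.2 = k' then z i - zbar else 0) q
    let θhat : (Fin K ⊕ Fin K) → ℝ :=
      (∑ i, (W i)ᵀ * V⁻¹ * W i)⁻¹ *ᵥ (∑ i, (W i)ᵀ *ᵥ (V⁻¹ *ᵥ y i))
    ∀ k : Fin K, θhat (Sum.inr k)
      = (∑ i, (z i - zbar)^2)⁻¹ * ∑ i, ∑ j : Fin m,
          (1 / (m:ℝ)) * (z i - zbar) * y i (j, k) :=
  stmt14_general hm Se Sp hSe hSp z zbar hc hv y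
end

section
/- Under the multivariate linear mixed model with equal cluster sizes, with W_i = 1_m ⊗ (I_K, (z_i − z̄)I_K), V⁻¹ as above, and Σ_i(z_i − z̄) = 0, the information matrix Σ_i W_i^T V⁻¹ W_i is block diagonal with lower-right K×K block equal to [Σ_i (z_i − z̄)²] · m (Σ_e + m Σ_φ)⁻¹. Consequently, the asymptotic covariance of √n(β̂ − β) equals Ω_β = (Σ_e + m Σ_φ)/(m σ_z²) where σ_z² = n⁻¹ Σ_i (z_i − z̄)². -/
/-!
With `S = Σ_e + m Σ_φ`, the identity `J_m 1_m = m 1_m` gives `V (1_m ⊗ C) = 1_m ⊗ S C`, hence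
`V⁻¹ (1_m ⊗ C) = 1_m ⊗ S⁻¹ C` and `W_iᵀ V⁻¹ W_i = m (I, c_i I)ᵀ S⁻¹ (I, c_i I)` with
`c_i = z_i - z̄`. Summing over clusters, `Σ c_i = 0` kills the off-diagonal blocks, so the
information matrix is `diag(m n S⁻¹, m Σ c_i² S⁻¹)` and its lower-right inverse block is
`S / (m Σ c_i²)`.
-/

open Matrix
open scoped Kronecker ComplexOrder

namespace Matrix

variable {ι κ ν μ R : Type*} [Fintype ι] [Fintype κ]

-- `C.submatrix Prod.snd id` is the Kronecker product `1_ι ⊗ C` of a column of ones with `C`.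
theorem kronecker_mul_submatrix_snd [CommSemiring R] {A : Matrix ι ι R} {r : R}
    (hA : ∀ i, ∑ j, A i j = r) (B : Matrix κ κ R) (C : Matrix κ ν R) :
    A ⊗ₖ B * C.submatrix (Prod.snd : ι × κ → κ) id = (r • (B * C)).submatrix Prod.snd id := by
  ext p q
  simp only [mul_apply, kroneckerMap_apply, submatrix_apply, id, smul_apply, smul_eq_mul,
    Fintype.sum_prod_type, mul_assoc, ← Finset.mul_sum, ← Finset.sum_mul, hA]

theorem transpose_submatrix_snd_mul_submatrix_snd [CommSemiring R] (C : Matrix κ ν R)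
    (D : Matrix κ μ R) :
    (C.submatrix (Prod.snd : ι × κ → κ) id)ᵀ * D.submatrix (Prod.snd : ι × κ → κ) id
      = Fintype.card ι • (Cᵀ * D) := by
  ext p q
  simp [mul_apply, Fintype.sum_prod_type]

theorem inv_fromBlocks_smul_zero_zero_smul [DecidableEq κ] [Field R] {P : Matrix κ κ R}
    (hP : IsUnit P.det) {a b : R} (ha : a ≠ 0) (hb : b ≠ 0) :
    (fromBlocks (a • P) 0 0 (b • P))⁻¹ = fromBlocks (a⁻¹ • P⁻¹) 0 0 (b⁻¹ • P⁻¹) := by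
  have hinv : ∀ {c : R}, c ≠ 0 → (c • P)⁻¹ = c⁻¹ • P⁻¹ := fun hc => inv_smul' P (Units.mk0 _ hc) hP
  have hunit : ∀ {c : R}, c ≠ 0 → IsUnit (c • P) := fun hc =>
    (isUnit_iff_isUnit_det _).mpr (by simpa [det_smul, hc] using hP)
  rw [inv_fromBlocks_zero₂₁_of_isUnit_iff _ _ _ (iff_of_true (hunit ha) (hunit hb)), hinv ha,
    hinv hb, Matrix.mul_zero, Matrix.zero_mul, neg_zero]

theorem PosDef.add_natCast_smul {n 𝕜 : Type*} [RCLike 𝕜] {A B : Matrix n n 𝕜} (hA : A.PosDef)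
    (hB : B.PosSemidef) (k : ℕ) : (A + (k : 𝕜) • B).PosDef :=
  hA.add_posSemidef (hB.smul (Nat.cast_nonneg k))

section ClusterModel

variable (ι) [DecidableEq ι]

-- `V = I_m ⊗ Σ_e + J_m ⊗ Σ_φ`, with `J_m = 1_m 1_mᵀ`.
def clusterCov [CommRing R] (Se Sp : Matrix κ κ R) : Matrix (ι × κ) (ι × κ) R :=
  1 ⊗ₖ Se + vecMulVec 1 1 ⊗ₖ Sp

-- `1_m ⊗ (I_K, c I_K)`.
variable (κ) in
def clusterDesign [DecidableEq κ] [CommRing R] (c : R) : Matrix (ι × κ) (κ ⊕ κ) R :=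
  (fromCols 1 (c • 1)).submatrix Prod.snd id

variable {ι}

theorem clusterCov_mul_submatrix_snd [CommRing R] (Se Sp : Matrix κ κ R) (C : Matrix κ ν R) :
    clusterCov ι Se Sp * C.submatrix (Prod.snd : ι × κ → κ) id
      = ((Se + (Fintype.card ι : R) • Sp) * C).submatrix Prod.snd id := by
  have hI : ∀ i, ∑ j, (1 : Matrix ι ι R) i j = 1 := fun i => by simp [one_apply]
  have hJ : ∀ i, ∑ j, (vecMulVec 1 1 : Matrix ι ι R) i j = Fintype.card ι := fun i => by
    simp [vecMulVec_apply]
  rw [clusterCov, Matrix.add_mul, kronecker_mul_submatrix_snd hI,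
    kronecker_mul_submatrix_snd hJ, one_smul, Matrix.add_mul, smul_mul]
  rfl

theorem PosDef.clusterCov {𝕜 : Type*} [RCLike 𝕜] {Se Sp : Matrix κ κ 𝕜} (hSe : Se.PosDef)
    (hSp : Sp.PosSemidef) : (clusterCov ι Se Sp).PosDef := by
  have hJ : (vecMulVec 1 1 : Matrix ι ι 𝕜).PosSemidef := by
    simpa using posSemidef_vecMulVec_self_star (1 : ι → 𝕜)
  exact (PosDef.one.kronecker hSe).add_posSemidef (hJ.kronecker hSp)

variable {𝕜 : Type*} [RCLike 𝕜] [DecidableEq κ] {Se Sp : Matrix κ κ 𝕜}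

theorem clusterCov_inv_mul_submatrix_snd (hSe : Se.PosDef) (hSp : Sp.PosSemidef)
    (C : Matrix κ ν 𝕜) :
    (clusterCov ι Se Sp)⁻¹ * C.submatrix (Prod.snd : ι × κ → κ) id
      = ((Se + (Fintype.card ι : 𝕜) • Sp)⁻¹ * C).submatrix Prod.snd id := by
  have := (hSe.clusterCov (ι := ι) hSp).isUnit.invertible
  rw [inv_mul_eq_iff_eq_mul_of_invertible, clusterCov_mul_submatrix_snd, ← Matrix.mul_assoc,
    mul_nonsing_inv _ (hSe.add_natCast_smul hSp _).det_pos.ne'.isUnit, Matrix.one_mul]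

theorem clusterDesign_transpose_mul_clusterCov_inv_mul (hSe : Se.PosDef) (hSp : Sp.PosSemidef)
    (c : 𝕜) :
    (clusterDesign ι κ c)ᵀ * (clusterCov ι Se Sp)⁻¹ * clusterDesign ι κ c
      = (Fintype.card ι : 𝕜) • fromBlocks (Se + (Fintype.card ι : 𝕜) • Sp)⁻¹
          (c • (Se + (Fintype.card ι : 𝕜) • Sp)⁻¹) (c • (Se + (Fintype.card ι : 𝕜) • Sp)⁻¹)
          (c ^ 2 • (Se + (Fintype.card ι : 𝕜) • Sp)⁻¹) := by
  rw [Matrix.mul_assoc, clusterDesign, clusterCov_inv_mul_submatrix_snd hSe hSp,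
    transpose_submatrix_snd_mul_submatrix_snd, transpose_fromCols, mul_fromCols,
    fromRows_mul_fromCols]
  simp [sq, smul_smul, Nat.cast_smul_eq_nsmul]

theorem sum_clusterDesign_transpose_mul_clusterCov_inv_mul {ι' : Type*} [Fintype ι']
    (hSe : Se.PosDef) (hSp : Sp.PosSemidef) (c : ι' → 𝕜) (hc : ∑ i, c i = 0) :
    ∑ i, (clusterDesign ι κ (c i))ᵀ * (clusterCov ι Se Sp)⁻¹ * clusterDesign ι κ (c i)
      = fromBlocks (((Fintype.card ι : 𝕜) * Fintype.card ι') • (Se + (Fintype.card ι : 𝕜) • Sp)⁻¹)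
          0 0 (((Fintype.card ι : 𝕜) * ∑ i, c i ^ 2) • (Se + (Fintype.card ι : 𝕜) • Sp)⁻¹) := by
  simp_rw [clusterDesign_transpose_mul_clusterCov_inv_mul hSe hSp]
  ext (k | k) (l | l) <;>
    simp [Matrix.sum_apply, ← Finset.mul_sum, ← Finset.sum_mul, hc, mul_assoc, mul_left_comm]

end ClusterModel

end Matrix

/-- the information matrix Σ_i Wᵢᵀ V⁻¹ Wᵢ is block diagonal with
lower-right K×K block [Σ_i (z_i−z̄)²]·m(Σ_e+mΣ_φ)⁻¹, hence the scaled covariance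
of the FGLS treatment effect estimator is Ω_β = (Σ_e + m Σ_φ)/(m σ_z²) with
σ_z² = n⁻¹ Σ_i (z_i − z̄)². -/
theorem stmt15 {K m n : ℕ} (hm : 1 ≤ m) (hn : 1 ≤ n)
    (Se Sp : Matrix (Fin K) (Fin K) ℝ) (hSe : Se.PosDef) (hSp : Sp.PosDef)
    (z : Fin n → ℝ) (zbar : ℝ)
    (hc : ∑ i, (z i - zbar) = 0) (hv : 0 < ∑ i, (z i - zbar)^2) :
    let V : Matrix (Fin m × Fin K) (Fin m × Fin K) ℝ :=
      Matrix.of fun p q => (if p.1 = q.1 then Se p.2 q.2 else 0) + Sp p.2 q.2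
    let W : Fin n → Matrix (Fin m × Fin K) (Fin K ⊕ Fin K) ℝ :=
      fun i => Matrix.of fun p q =>
        Sum.elim (fun k' => if p.2 = k' then (1:ℝ) else 0)
                 (fun k' => if p.2 = k' then z i - zbar else 0) q
    let U := ∑ i, (W i)ᵀ * V⁻¹ * W i
    let sz2 : ℝ := (1 / (n:ℝ)) * ∑ i, (z i - zbar)^2
    (∀ k k' : Fin K, U (Sum.inl k) (Sum.inr k') = 0 ∧ U (Sum.inr k) (Sum.inl k') = 0) ∧
    (∀ k k' : Fin K, U (Sum.inr k) (Sum.inr k')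
        = (∑ i, (z i - zbar)^2) * ((m:ℝ) * (Se + (m:ℝ) • Sp)⁻¹ k k')) ∧
    (∀ k k' : Fin K, (n:ℝ) * U⁻¹ (Sum.inr k) (Sum.inr k')
        = (1 / ((m:ℝ) * sz2)) * (Se + (m:ℝ) • Sp) k k') := by
  intro V W U sz2
  have hV : V = clusterCov (Fin m) Se Sp := by
    ext ⟨i, k⟩ ⟨j, l⟩
    simp [V, clusterCov, one_apply]
  have hW : W = fun i => clusterDesign (Fin m) (Fin K) (z i - zbar) := by
    ext i p (k | k) <;> simp [W, clusterDesign, one_apply]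
  have hU : U = fromBlocks (((m : ℝ) * n) • (Se + (m : ℝ) • Sp)⁻¹) 0 0
      (((m : ℝ) * ∑ i, (z i - zbar) ^ 2) • (Se + (m : ℝ) • Sp)⁻¹) := by
    simpa [U, hV, hW] using
      sum_clusterDesign_transpose_mul_clusterCov_inv_mul (ι := Fin m) hSe hSp.posSemidef _ hc
  have hS : IsUnit (Se + (m : ℝ) • Sp).det :=
    (hSe.add_natCast_smul hSp.posSemidef m).det_pos.ne'.isUnit
  have hm0 : (0 : ℝ) < m := Nat.cast_pos.mpr hm
  have hn0 : (0 : ℝ) < n := Nat.cast_pos.mpr hn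
  refine ⟨fun k l => by simp [hU], fun k l => by simp [hU]; ring, fun k l => ?_⟩
  rw [hU, inv_fromBlocks_smul_zero_zero_smul (isUnit_nonsing_inv_det _ hS)
    (mul_pos hm0 hn0).ne' (mul_pos hm0 hv).ne', fromBlocks_apply₂₂, Matrix.smul_apply,
    nonsing_inv_nonsing_inv _ hS, smul_eq_mul]
  simp only [sz2]
  field_simp
end
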